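/- For every multi-index β, there exists a polynomial P of degree 2|β|+1 and a constant C (depending on β, μ̃, and the C^{|β|+1} norm of ∇φ) such that |Z^β K(s,y,z)| ≤ C P(z/√s) e^{−z²/(4 μ̃ |N(y)|² s)} s^{−1} for all s > 0, z > 0, y ∈ ℝ², where K(s,y,z) = μ̃|N|² (4π μ̃ |N|² s)^{−1/2} ∂_z( e^{−z²/(4 μ̃ |N|² s)} ) and Z^β = ∂_{y¹}^{β₁}∂_{y²}^{β₂}((z/(1+z))∂_z)^{β₃}. -/

import Mathlib

/-!
For `s, z > 0` every `Z^β K` is a finite sum of terms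
`c(y) a(y)^e (z/√s)^k (1+z)^{-r} s⁻¹ exp(-z²/(4μ̃ a(y) s))`, where `a = |N|² ≥ 1`, `e ≤ 0`,
`k ≤ 2|β| + 1` and `c` is bounded. Indeed `K` itself is such a term with `k = 1`, and each of
`(z/(1+z))∂_z` and `∂_{yⁱ}` turns one term into three, raising `k` by at most `2`: differentiating
the Gaussian produces `z²/s = (z/√s)²` times a negative power of `a`. Each `∂_{yⁱ}` costs one
derivative of the coefficients, which is why `C^{|β|+1}` bounds on `φ` suffice. Finally, as
`a ≥ 1` and `e ≤ 0`, a term is at most `sup |c| (1 + z/√s)^k s⁻¹ exp(-z²/(4μ̃ a s))`, whence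
`P = (X + 1)^{2|β|+1}`.
-/

open MeasureTheory Real

/-- Partial derivative in the `i`-th coordinate direction in `ℝ²`. -/
noncomputable def pd2 (i : Fin 2) (f : (Fin 2 → ℝ) → ℝ) (y : Fin 2 → ℝ) : ℝ :=
  fderiv ℝ f y (Pi.single i 1)

/-- The vector field `N(y) = (∂₁φ(y), ∂₂φ(y), −1)`. -/
noncomputable def Nphi (φ : (Fin 2 → ℝ) → ℝ) (y : Fin 2 → ℝ) : Fin 3 → ℝ :=
  ![pd2 0 φ y, pd2 1 φ y, (-1 : ℝ)]

/-- `|N(y)|²`, the squared Euclidean norm of the vector field `N`. -/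
noncomputable def nsq (N : (Fin 2 → ℝ) → (Fin 3 → ℝ)) (y : Fin 2 → ℝ) : ℝ :=
  ∑ i, (N y i) ^ 2

/-- The kernel `K(s,y,z) = μ̃|N|² (4π μ̃ |N|² s)^{−1/2} ∂_z( e^{−z²/(4 μ̃ |N|² s)} )`. -/
noncomputable def Khk (μ : ℝ) (N : (Fin 2 → ℝ) → (Fin 3 → ℝ)) (s : ℝ)
    (y : Fin 2 → ℝ) (z : ℝ) : ℝ :=
  μ * nsq N y * (4 * Real.pi * μ * nsq N y * s) ^ (-(1 : ℝ) / 2) *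
    deriv (fun w => Real.exp (-(w ^ 2) / (4 * μ * nsq N y * s))) z

/-- Tangential derivative `∂_{yⁱ}` of a function of `(y,z)`. -/
noncomputable def Dy (i : Fin 2) (g : (Fin 2 → ℝ) → ℝ → ℝ) : (Fin 2 → ℝ) → ℝ → ℝ :=
  fun y z => fderiv ℝ (fun y' => g y' z) y (Pi.single i 1)

/-- The conormal vector field `Z₃ = (z/(1+z)) ∂_z`. -/
noncomputable def Z3op (g : (Fin 2 → ℝ) → ℝ → ℝ) : (Fin 2 → ℝ) → ℝ → ℝ :=
  fun y z => (z / (1 + z)) * deriv (g y) z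

/-- `Z^β = ∂_{y¹}^{β₁} ∂_{y²}^{β₂} ((z/(1+z))∂_z)^{β₃}`. -/
noncomputable def Zbeta (β : ℕ × ℕ × ℕ) (g : (Fin 2 → ℝ) → ℝ → ℝ) :
    (Fin 2 → ℝ) → ℝ → ℝ :=
  (Dy 0)^[β.1] ((Dy 1)^[β.2.1] (Z3op^[β.2.2] g))

section

variable {E : Type*} [NormedAddCommGroup E] [NormedSpace ℝ E]

def ContDiffBdd (m : ℕ) (c : E → ℝ) : Prop :=
  ContDiff ℝ m c ∧ ∃ M, ∀ k ≤ m, ∀ y, ‖iteratedFDeriv ℝ k c y‖ ≤ M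

namespace ContDiffBdd

variable {m : ℕ} {c c₁ c₂ : E → ℝ}

theorem of_le {k : ℕ} (h : ContDiffBdd m c) (hk : k ≤ m) : ContDiffBdd k c :=
  ⟨h.1.of_le (by exact_mod_cast hk), h.2.imp fun _ hM j hj => hM j (hj.trans hk)⟩

theorem const (m : ℕ) (A : ℝ) : ContDiffBdd m (fun _ : E => A) := by
  refine ⟨contDiff_const, |A|, fun k _ y => ?_⟩
  cases k with
  | zero => simp
  | succ n => simp [iteratedFDeriv_const_of_ne]

theorem differentiable (h : ContDiffBdd (m + 1) c) : Differentiable ℝ c :=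
  h.1.differentiable (by simp)

theorem exists_abs_le (h : ContDiffBdd m c) : ∃ M, ∀ y, |c y| ≤ M := by
  obtain ⟨-, M, hM⟩ := h
  exact ⟨M, fun y => by simpa using hM 0 (Nat.zero_le _) y⟩

theorem add (h₁ : ContDiffBdd m c₁) (h₂ : ContDiffBdd m c₂) :
    ContDiffBdd m (fun y => c₁ y + c₂ y) := by
  obtain ⟨hc₁, M₁, hM₁⟩ := h₁
  obtain ⟨hc₂, M₂, hM₂⟩ := h₂
  refine ⟨hc₁.add hc₂, M₁ + M₂, fun k hk y => ?_⟩
  rw [← Pi.add_def, iteratedFDeriv_add_apply (hc₁.of_le (by exact_mod_cast hk)).contDiffAt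
    (hc₂.of_le (by exact_mod_cast hk)).contDiffAt]
  exact (norm_add_le _ _).trans (add_le_add (hM₁ k hk y) (hM₂ k hk y))

theorem mul (h₁ : ContDiffBdd m c₁) (h₂ : ContDiffBdd m c₂) :
    ContDiffBdd m (fun y => c₁ y * c₂ y) := by
  obtain ⟨hc₁, M₁, hM₁⟩ := h₁
  obtain ⟨hc₂, M₂, hM₂⟩ := h₂
  have hM₁0 : 0 ≤ M₁ := (norm_nonneg _).trans (hM₁ 0 (Nat.zero_le _) 0)
  refine ⟨hc₁.mul hc₂, 2 ^ m * (M₁ * M₂), fun k hk y => ?_⟩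
  calc ‖iteratedFDeriv ℝ k (fun y => c₁ y * c₂ y) y‖
      ≤ ∑ i ∈ Finset.range (k + 1), (k.choose i : ℝ) * ‖iteratedFDeriv ℝ i c₁ y‖ *
          ‖iteratedFDeriv ℝ (k - i) c₂ y‖ :=
        norm_iteratedFDeriv_mul_le hc₁ hc₂ y (by exact_mod_cast hk)
    _ ≤ ∑ i ∈ Finset.range (k + 1), (k.choose i : ℝ) * (M₁ * M₂) := by
        refine Finset.sum_le_sum fun i hi => ?_
        rw [mul_assoc]
        have hik : i ≤ k := Nat.lt_succ_iff.1 (Finset.mem_range.1 hi)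
        gcongr
        · exact hM₁ i (hik.trans hk) y
        · exact hM₂ _ ((Nat.sub_le _ _).trans hk) y
    _ = 2 ^ k * (M₁ * M₂) := by
        rw [← Finset.sum_mul]
        exact_mod_cast congrArg (fun n : ℕ => (n : ℝ) * (M₁ * M₂)) (Nat.sum_range_choose k)
    _ ≤ 2 ^ m * (M₁ * M₂) := by
        have : 0 ≤ M₁ * M₂ := mul_nonneg hM₁0 ((norm_nonneg _).trans (hM₂ 0 (Nat.zero_le _) 0))
        gcongr
        exact one_le_two

theorem const_mul (A : ℝ) (h : ContDiffBdd m c) : ContDiffBdd m (fun y => A * c y) :=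
  (const m A).mul h

theorem fderiv_apply (h : ContDiffBdd (m + 1) c) (v : E) :
    ContDiffBdd m (fun y => fderiv ℝ c y v) := by
  obtain ⟨hc, M, hM⟩ := h
  have hfd : ContDiff ℝ m (fderiv ℝ c) := hc.fderiv_right (by exact_mod_cast le_rfl)
  refine ⟨hfd.clm_apply contDiff_const, ‖v‖ * M, fun k hk y => ?_⟩
  calc ‖iteratedFDeriv ℝ k (fun y => fderiv ℝ c y v) y‖
      ≤ ‖v‖ * ‖iteratedFDeriv ℝ k (fderiv ℝ c) y‖ :=
        norm_iteratedFDeriv_clm_apply_const hfd.contDiffAt (by exact_mod_cast hk)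
    _ ≤ ‖v‖ * M := by
        rw [norm_iteratedFDeriv_fderiv]
        exact mul_le_mul_of_nonneg_left (hM (k + 1) (by omega) y) (norm_nonneg v)

end ContDiffBdd

end

noncomputable def heatTerm (μ : ℝ) (a c : (Fin 2 → ℝ) → ℝ) (e : ℝ) (k r : ℕ) (s : ℝ)
    (y : Fin 2 → ℝ) (z : ℝ) : ℝ :=
  c y * a y ^ e * ((z / √s) ^ k / (1 + z) ^ r / s) * exp (-(z ^ 2) / (4 * μ * a y * s))

section heatTerm

variable {μ : ℝ} {a c : (Fin 2 → ℝ) → ℝ} {e : ℝ} {k r : ℕ} {s : ℝ} {y : Fin 2 → ℝ} {z : ℝ}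

theorem differentiableAt_heatTerm_z (hz : 0 < z) :
    DifferentiableAt ℝ (heatTerm μ a c e k r s y) z := by
  have : (1 + z) ^ r ≠ 0 := by positivity
  unfold heatTerm
  fun_prop (disch := assumption)

theorem differentiableAt_heatTerm_y (hμ : μ ≠ 0) (hs : s ≠ 0) (ha : a y ≠ 0)
    (haD : DifferentiableAt ℝ a y) (hcD : DifferentiableAt ℝ c y) :
    DifferentiableAt ℝ (fun y' => heatTerm μ a c e k r s y' z) y := by
  have : 4 * μ * a y * s ≠ 0 := by simp [*]
  unfold heatTerm
  fun_prop (disch := assumption)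

theorem z3op_heatTerm (hμ : μ ≠ 0) (ha : a y ≠ 0) (hs : 0 < s) (hz : 0 < z) :
    Z3op (heatTerm μ a c e k r s) y z =
      heatTerm μ a (fun y => (k - r : ℝ) * c y) e k (r + 1) s y z +
      heatTerm μ a (fun y => r * c y) e k (r + 2) s y z +
      heatTerm μ a (fun y => -(2 * μ)⁻¹ * c y) (e - 1) (k + 2) (r + 1) s y z := by
  have hz1 : 1 + z ≠ 0 := by positivity
  have hx := ((hasDerivAt_id' z).div_const √s).fun_pow k
  have hw := ((hasDerivAt_id' z).const_add 1).fun_pow r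
  have hE := (((hasDerivAt_pow 2 z).neg).div_const (4 * μ * a y * s)).exp
  have hD : HasDerivAt (heatTerm μ a c e k r s y) _ z :=
    (((hx.fun_div hw (pow_ne_zero r hz1)).div_const s).const_mul (c y * a y ^ e)).mul hE
  obtain ⟨t, ht, rfl⟩ : ∃ t, 0 < t ∧ s = t ^ 2 := ⟨√s, sqrt_pos.2 hs, (sq_sqrt hs.le).symm⟩
  have ht0 : t ≠ 0 := ht.ne'
  rw [Z3op, hD.deriv]
  simp only [heatTerm, rpow_sub_one ha, sqrt_sq ht.le]
  generalize exp (-(z ^ 2) / (4 * μ * a y * t ^ 2)) = E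
  rcases k with _ | k <;> rcases r with _ | r <;>
    · simp only [div_pow, Nat.add_sub_cancel, Nat.cast_zero, zero_mul, zero_sub]
      field_simp
      ring

theorem dy_heatTerm (hμ : μ ≠ 0) (ha : a y ≠ 0) (haD : DifferentiableAt ℝ a y)
    (hcD : DifferentiableAt ℝ c y) (hs : 0 < s) (i : Fin 2) :
    Dy i (heatTerm μ a c e k r s) y z =
      heatTerm μ a (fun y => fderiv ℝ c y (Pi.single i 1)) e k r s y z +
      heatTerm μ a (fun y => e * c y * fderiv ℝ a y (Pi.single i 1)) (e - 1) k r s y z +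
      heatTerm μ a (fun y => (4 * μ)⁻¹ * c y * fderiv ℝ a y (Pi.single i 1))
        (e - 2) (k + 2) r s y z := by
  have hden : 4 * μ * a y * s ≠ 0 := by simp [*, hs.ne']
  have hq : HasDerivAt (fun u => -(z ^ 2) / (4 * μ * u * s)) _ (a y) :=
    (hasDerivAt_const _ _).fun_div (((hasDerivAt_id' _).const_mul (4 * μ)).mul_const s) hden
  have hD : HasFDerivAt (fun y' => heatTerm μ a c e k r s y' z) _ y :=
    ((hcD.hasFDerivAt.fun_mul (haD.hasFDerivAt.rpow_const (Or.inl ha))).mul_const _).fun_mul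
      (hq.comp_hasFDerivAt y haD.hasFDerivAt).exp
  obtain ⟨t, ht, rfl⟩ : ∃ t, 0 < t ∧ s = t ^ 2 := ⟨√s, sqrt_pos.2 hs, (sq_sqrt hs.le).symm⟩
  have ht0 : t ≠ 0 := ht.ne'
  have hrpow : a y ^ (e - 2) = a y ^ e / a y ^ 2 := by exact_mod_cast rpow_sub_natCast ha e 2
  rw [Dy, hD.fderiv]
  simp only [heatTerm, rpow_sub_one ha, hrpow, sqrt_sq ht.le, Function.comp_apply,
    add_apply, smul_apply, smul_eq_mul, div_pow]
  generalize exp (-(z ^ 2) / (4 * μ * a y * t ^ 2)) = E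
  field_simp
  ring

theorem abs_heatTerm_le (ha : 1 ≤ a y) (he : e ≤ 0) (hs : 0 < s) (hz : 0 < z) :
    |heatTerm μ a c e k r s y z| ≤
      |c y| * (z / √s) ^ k * exp (-(z ^ 2) / (4 * μ * a y * s)) * s⁻¹ := by
  have hae : 0 ≤ a y ^ e := rpow_nonneg (zero_le_one.trans ha) e
  have hz1 : 1 ≤ (1 + z) ^ r := one_le_pow₀ (by linarith)
  have hq : 0 ≤ (z / √s) ^ k / (1 + z) ^ r / s := by positivity
  rw [heatTerm, abs_mul, abs_mul, abs_mul, abs_of_nonneg hae, abs_of_nonneg hq,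
    abs_of_pos (exp_pos _)]
  calc |c y| * a y ^ e * ((z / √s) ^ k / (1 + z) ^ r / s) * exp (-(z ^ 2) / (4 * μ * a y * s))
      ≤ |c y| * 1 * ((z / √s) ^ k / 1 / s) * exp (-(z ^ 2) / (4 * μ * a y * s)) := by
        gcongr
        exact rpow_le_one_of_one_le_of_nonpos ha he
    _ = |c y| * (z / √s) ^ k * exp (-(z ^ 2) / (4 * μ * a y * s)) * s⁻¹ := by ring

end heatTerm

inductive HeatSpan (μ : ℝ) (a : (Fin 2 → ℝ) → ℝ) (m n : ℕ) :
    (ℝ → (Fin 2 → ℝ) → ℝ → ℝ) → Prop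
  | term {c : (Fin 2 → ℝ) → ℝ} {e : ℝ} {k : ℕ} (r : ℕ) (hc : ContDiffBdd m c) (he : e ≤ 0)
      (hk : k ≤ n) : HeatSpan μ a m n (heatTerm μ a c e k r)
  | add {g₁ g₂} : HeatSpan μ a m n g₁ → HeatSpan μ a m n g₂ →
      HeatSpan μ a m n (fun s y z => g₁ s y z + g₂ s y z)
  | congr {g₁ g₂} : HeatSpan μ a m n g₁ → (∀ s > 0, ∀ y, ∀ z > 0, g₁ s y z = g₂ s y z) →
      HeatSpan μ a m n g₂

namespace HeatSpan

variable {μ : ℝ} {a : (Fin 2 → ℝ) → ℝ} {m n : ℕ} {g : ℝ → (Fin 2 → ℝ) → ℝ → ℝ}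

theorem differentiableAt_z (h : HeatSpan μ a m n g) {s : ℝ} (hs : 0 < s) (y : Fin 2 → ℝ)
    {z : ℝ} (hz : 0 < z) : DifferentiableAt ℝ (g s y) z := by
  induction h generalizing z with
  | term => exact differentiableAt_heatTerm_z hz
  | add _ _ ih₁ ih₂ => exact (ih₁ hz).add (ih₂ hz)
  | congr _ heq ih =>
      refine (ih hz).congr_of_eventuallyEq ?_
      filter_upwards [Ioi_mem_nhds hz] with w hw
      exact (heq s hs y w hw).symm

theorem differentiableAt_y (hμ : μ ≠ 0) (ha : ∀ y, a y ≠ 0) (haD : Differentiable ℝ a)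
    (h : HeatSpan μ a (m + 1) n g) {s : ℝ} (hs : 0 < s) {z : ℝ} (hz : 0 < z)
    (y : Fin 2 → ℝ) : DifferentiableAt ℝ (fun y' => g s y' z) y := by
  induction h generalizing y with
  | term r hc => exact differentiableAt_heatTerm_y hμ hs.ne' (ha y) (haD y) (hc.differentiable y)
  | add _ _ ih₁ ih₂ => exact (ih₁ y).add (ih₂ y)
  | congr _ heq ih => simpa only [heq s hs _ z hz] using ih y

theorem z3op (hμ : μ ≠ 0) (ha : ∀ y, a y ≠ 0) (h : HeatSpan μ a m n g) :
    HeatSpan μ a m (n + 2) (fun s => Z3op (g s)) := by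
  induction h with
  | @term c e k r hc he hk =>
      refine .congr (.add (.add (.term (k := k) (r + 1) (hc.const_mul (k - r)) he (by omega))
        (.term (k := k) (r + 2) (hc.const_mul r) he (by omega)))
        (.term (e := e - 1) (k := k + 2) (r + 1) (hc.const_mul (-(2 * μ)⁻¹)) (by linarith)
          (by omega))) fun s hs y z hz => (z3op_heatTerm hμ (ha y) hs hz).symm
  | add h₁ h₂ ih₁ ih₂ =>
      refine .congr (.add ih₁ ih₂) fun s hs y z hz => ?_
      simp only [Z3op]
      rw [deriv_fun_add (h₁.differentiableAt_z hs y hz) (h₂.differentiableAt_z hs y hz), mul_add]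
  | congr _ heq ih =>
      refine .congr ih fun s hs y z hz => ?_
      simp only [Z3op]
      congr 1
      refine Filter.EventuallyEq.deriv_eq ?_
      filter_upwards [Ioi_mem_nhds hz] with w hw
      exact heq s hs y w hw

theorem dy (hμ : μ ≠ 0) (ha : ∀ y, a y ≠ 0) (haC : ContDiffBdd (m + 1) a) (i : Fin 2)
    (h : HeatSpan μ a (m + 1) n g) : HeatSpan μ a m (n + 2) (fun s => Dy i (g s)) := by
  induction h with
  | @term c e k r hc he hk =>
      have hca : ContDiffBdd m (fun y => c y * fderiv ℝ a y (Pi.single i 1)) :=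
        (hc.of_le m.le_succ).mul (haC.fderiv_apply _)
      refine .congr (.add (.add (.term (k := k) r (hc.fderiv_apply _) he (by omega))
        (.term (e := e - 1) (k := k) r (by simpa only [mul_assoc] using hca.const_mul e)
          (by linarith) (by omega)))
        (.term (e := e - 2) (k := k + 2) r
          (by simpa only [mul_assoc] using hca.const_mul (4 * μ)⁻¹) (by linarith) (by omega)))
        fun s hs y z hz =>
          (dy_heatTerm hμ (ha y) (haC.differentiable y) (hc.differentiable y) hs i).symm
  | add h₁ h₂ ih₁ ih₂ =>
      refine .congr (.add ih₁ ih₂) fun s hs y z hz => ?_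
      simp only [Dy]
      rw [fderiv_fun_add (h₁.differentiableAt_y hμ ha haC.differentiable hs hz y)
        (h₂.differentiableAt_y hμ ha haC.differentiable hs hz y)]
      rfl
  | congr _ heq ih =>
      refine .congr ih fun s hs y z hz => ?_
      simp only [Dy, heq s hs _ z hz]

theorem iterate_z3op (hμ : μ ≠ 0) (ha : ∀ y, a y ≠ 0) (h : HeatSpan μ a m n g) (j : ℕ) :
    HeatSpan μ a m (n + 2 * j) (fun s => Z3op^[j] (g s)) := by
  induction j with
  | zero => simpa using h
  | succ j ih =>
      simpa only [Function.iterate_succ_apply', Nat.mul_succ, ← add_assoc] using ih.z3op hμ ha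

theorem iterate_dy (hμ : μ ≠ 0) (ha : ∀ y, a y ≠ 0) (i : Fin 2) {j : ℕ}
    (haC : ContDiffBdd (m + j) a) (h : HeatSpan μ a (m + j) n g) :
    HeatSpan μ a m (n + 2 * j) (fun s => (Dy i)^[j] (g s)) := by
  induction j generalizing n g with
  | zero => simpa using h
  | succ j ih =>
      have := ih (haC.of_le (by omega)) (h.dy hμ ha haC i)
      simpa only [Function.iterate_succ_apply, Nat.mul_succ, add_assoc, add_comm 2] using this

theorem zbeta (hμ : μ ≠ 0) (ha : ∀ y, a y ≠ 0) (β : ℕ × ℕ × ℕ)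
    (haC : ContDiffBdd (β.1 + β.2.1) a) (h : HeatSpan μ a (β.1 + β.2.1) n g) :
    HeatSpan μ a 0 (2 * (β.1 + β.2.1 + β.2.2) + n) (fun s => Zbeta β (g s)) := by
  obtain ⟨β₁, β₂, β₃⟩ := β
  dsimp only at haC h ⊢
  have h₂ : HeatSpan μ a (0 + β₁) (n + 2 * β₃ + 2 * β₂)
      (fun s => (Dy 1)^[β₂] (Z3op^[β₃] (g s))) := by
    rw [zero_add]
    exact (h.iterate_z3op hμ ha β₃).iterate_dy hμ ha 1 haC
  have h₁ := h₂.iterate_dy hμ ha 0 (by rw [zero_add]; exact haC.of_le (Nat.le_add_right β₁ β₂))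
  rwa [show 2 * (β₁ + β₂ + β₃) + n = n + 2 * β₃ + 2 * β₂ + 2 * β₁ by ring]

theorem exists_bound (ha : ∀ y, 1 ≤ a y) (h : HeatSpan μ a m n g) :
    ∃ C > 0, ∀ s > 0, ∀ y, ∀ z > 0,
      |g s y z| ≤ C * (z / √s + 1) ^ n * exp (-(z ^ 2) / (4 * μ * a y * s)) * s⁻¹ := by
  induction h with
  | @term c e k r hc he hk =>
      obtain ⟨M, hM⟩ := hc.exists_abs_le
      refine ⟨max M 1, by positivity, fun s hs y z hz =>
        (abs_heatTerm_le (ha y) he hs hz).trans ?_⟩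
      have hx : 0 ≤ z / √s := by positivity
      gcongr
      · exact (hM y).trans (le_max_left _ _)
      · calc (z / √s) ^ k ≤ (z / √s + 1) ^ k := by gcongr; linarith
          _ ≤ (z / √s + 1) ^ n := pow_le_pow_right₀ (by linarith) hk
  | add _ _ ih₁ ih₂ =>
      obtain ⟨C₁, hC₁, hb₁⟩ := ih₁
      obtain ⟨C₂, hC₂, hb₂⟩ := ih₂
      refine ⟨C₁ + C₂, by positivity, fun s hs y z hz => (abs_add_le _ _).trans ?_⟩
      linarith [hb₁ s hs y z hz, hb₂ s hs y z hz]
  | congr _ heq ih =>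
      obtain ⟨C, hC, hb⟩ := ih
      exact ⟨C, hC, fun s hs y z hz => heq s hs y z hz ▸ hb s hs y z hz⟩

end HeatSpan

theorem khk_eq_heatTerm {μ : ℝ} (hμ : 0 < μ) {N : (Fin 2 → ℝ) → Fin 3 → ℝ} {s : ℝ} (hs : 0 < s)
    {y : Fin 2 → ℝ} (ha : 0 < nsq N y) (z : ℝ) :
    Khk μ N s y z =
      heatTerm μ (nsq N) (fun _ => -(1 / 2) * (4 * π * μ) ^ (-(1 : ℝ) / 2)) (-(1 : ℝ) / 2) 1 0
        s y z := by
  have hE : HasDerivAt (fun w => exp (-(w ^ 2) / (4 * μ * nsq N y * s))) _ z :=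
    (((hasDerivAt_pow 2 z).fun_neg).div_const (4 * μ * nsq N y * s)).exp
  have hsplit : (4 * π * μ * nsq N y * s) ^ (-(1 : ℝ) / 2) =
      (4 * π * μ) ^ (-(1 : ℝ) / 2) * nsq N y ^ (-(1 : ℝ) / 2) * (√s)⁻¹ := by
    rw [mul_rpow (by positivity) hs.le, mul_rpow (by positivity) ha.le, sqrt_eq_rpow,
      ← rpow_neg hs.le]
    ring_nf
  have hs0 : √s ≠ 0 := (sqrt_pos.2 hs).ne'
  rw [Khk, hE.deriv, hsplit, heatTerm]
  field_simp
  norm_num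

theorem heatSpan_khk {μ : ℝ} (hμ : 0 < μ) {N : (Fin 2 → ℝ) → Fin 3 → ℝ}
    (ha : ∀ y, 0 < nsq N y) (m : ℕ) : HeatSpan μ (nsq N) m 1 (Khk μ N) :=
  .congr (.term 0 (.const m _) (by norm_num) le_rfl) fun _ hs y z _ =>
    (khk_eq_heatTerm hμ hs (ha y) z).symm

theorem nsq_Nphi_eq (φ : (Fin 2 → ℝ) → ℝ) (y : Fin 2 → ℝ) :
    nsq (Nphi φ) y = pd2 0 φ y ^ 2 + pd2 1 φ y ^ 2 + 1 := by
  simp [nsq, Nphi, Fin.sum_univ_three]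

theorem one_le_nsq_Nphi (φ : (Fin 2 → ℝ) → ℝ) (y : Fin 2 → ℝ) : 1 ≤ nsq (Nphi φ) y := by
  rw [nsq_Nphi_eq]
  exact le_add_of_nonneg_left (by positivity)

theorem ContDiffBdd.nsq_Nphi {m : ℕ} {φ : (Fin 2 → ℝ) → ℝ} (h : ContDiffBdd (m + 1) φ) :
    ContDiffBdd m (nsq (Nphi φ)) := by
  have h₀ := h.fderiv_apply (Pi.single 0 1)
  have h₁ := h.fderiv_apply (Pi.single 1 1)
  rw [funext (nsq_Nphi_eq φ)]
  simpa only [sq, pd2] using ((h₀.mul h₀).add (h₁.mul h₁)).add (.const m 1)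

/-- Pointwise conormal bound on the heat kernel: for every multi-index `β` there is a
polynomial `P` of degree `2|β|+1` and a constant `C` (depending on `β`, `μ̃` and the
`C^{|β|+1}` norm of `∇φ`) with
`|Z^β K(s,y,z)| ≤ C |P(z/√s)| e^{−z²/(4 μ̃ |N|² s)} s^{−1}` for all `s > 0`, `z > 0`, `y`. -/
theorem stmt7 (μ : ℝ) (hμ : 0 < μ) (β : ℕ × ℕ × ℕ)
    (φ : (Fin 2 → ℝ) → ℝ)
    (hφ : ContDiff ℝ ((β.1 + β.2.1 + β.2.2 + 2 : ℕ) : ℕ∞) φ)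
    (B : ℝ)
    (hB : ∀ n ≤ β.1 + β.2.1 + β.2.2 + 2, ∀ y, ‖iteratedFDeriv ℝ n φ y‖ ≤ B) :
    ∃ (P : Polynomial ℝ) (C : ℝ), 0 < C ∧
      P.natDegree = 2 * (β.1 + β.2.1 + β.2.2) + 1 ∧
      ∀ s > 0, ∀ y : Fin 2 → ℝ, ∀ z > 0,
        |Zbeta β (Khk μ (Nphi φ) s) y z|
          ≤ C * |P.eval (z / Real.sqrt s)| *
              Real.exp (-(z ^ 2) / (4 * μ * nsq (Nphi φ) y * s)) * s⁻¹ := by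
  have hφ' : ContDiffBdd (β.1 + β.2.1 + 1) φ :=
    ⟨hφ.of_le (by exact_mod_cast (by omega : β.1 + β.2.1 + 1 ≤ β.1 + β.2.1 + β.2.2 + 2)),
      B, fun k hk => hB k (by omega)⟩
  have ha (y) : 0 < nsq (Nphi φ) y := zero_lt_one.trans_le (one_le_nsq_Nphi φ y)
  have hK := (heatSpan_khk hμ ha _).zbeta hμ.ne' (fun y => (ha y).ne') β hφ'.nsq_Nphi
  obtain ⟨C, hC, hbound⟩ := hK.exists_bound (one_le_nsq_Nphi φ)
  refine ⟨(Polynomial.X + Polynomial.C 1) ^ (2 * (β.1 + β.2.1 + β.2.2) + 1), C, hC,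
    Polynomial.natDegree_pow_X_add_C _ _, fun s hs y z hz => ?_⟩
  have hx : 0 ≤ z / √s + 1 := by positivity
  simpa [abs_of_nonneg hx] using hbound s hs y z hz
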